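/- arXiv:2005.11661 — 2 statements merged into one kernel-verified Lean document; each statement's English description precedes it below -/
import Mathlib

section
/- Let a, b > 0 with a² - 4b ≥ (1/4) a², let λ₁ = (-a - √(a²-4b))/2 and λ₂ = (-a + √(a²-4b))/2, and let t ≥ 0. Then |(e^{λ₁ t} - e^{λ₂ t})/(λ₁ - λ₂)| ≤ (2/a)(e^{-(3/4) a t} + e^{-(b/a) t}). -/
/-!
Write `s = √(a² - 4b)`, so `λ₁ - λ₂ = -s`. The gap hypothesis gives `s ≥ a / 2`, hence
`λ₁ = (-a - s) / 2 ≤ -(3/4) a`; and since `λ₂` is a root, `a λ₂ = -b - λ₂² ≤ -b`. Bounding each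
exponential separately and dividing by `s ≥ a / 2` gives the claim.
-/

open Real

lemma le_neg_div_of_sq_add_mul_add_eq_zero {a b x : ℝ} (ha : 0 < a)
    (hx : x ^ 2 + a * x + b = 0) : x ≤ -(b / a) := by
  rw [← neg_div, le_div_iff₀ ha]
  nlinarith [sq_nonneg x]

lemma abs_exp_mul_sub_exp_mul_le {x x' y y' t : ℝ} (hx : x ≤ x') (hy : y ≤ y') (ht : 0 ≤ t) :
    |exp (x * t) - exp (y * t)| ≤ exp (x' * t) + exp (y' * t) := by
  calc |exp (x * t) - exp (y * t)| ≤ |exp (x * t)| + |exp (y * t)| := abs_sub _ _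
    _ = exp (x * t) + exp (y * t) := by rw [abs_of_pos (exp_pos _), abs_of_pos (exp_pos _)]
    _ ≤ exp (x' * t) + exp (y' * t) := by gcongr

theorem stmt4_general (a b l1 l2 t : ℝ) (ha : 0 < a)
    (hgap : (1 / 4) * a ^ 2 ≤ a ^ 2 - 4 * b)
    (hl1 : l1 = (-a - Real.sqrt (a ^ 2 - 4 * b)) / 2)
    (hl2 : l2 = (-a + Real.sqrt (a ^ 2 - 4 * b)) / 2)
    (ht : 0 ≤ t) :
    |(Real.exp (l1 * t) - Real.exp (l2 * t)) / (l1 - l2)| ≤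
      (2 / a) * (Real.exp (-(3 / 4) * a * t) + Real.exp (-(b / a) * t)) := by
  set s := √(a ^ 2 - 4 * b)
  have hs : a / 2 ≤ s := le_sqrt_of_sq_le (by linarith)
  have hs_sq : s ^ 2 = a ^ 2 - 4 * b := sq_sqrt (by linarith [sq_nonneg a])
  have hl1_le : l1 ≤ -(3 / 4) * a := by rw [hl1]; linarith
  have hl2_le : l2 ≤ -(b / a) :=
    le_neg_div_of_sq_add_mul_add_eq_zero ha (by rw [hl2]; linear_combination hs_sq / 4)
  have hdiff : l1 - l2 = -s := by rw [hl1, hl2]; ring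
  calc |(exp (l1 * t) - exp (l2 * t)) / (l1 - l2)|
      = |exp (l1 * t) - exp (l2 * t)| / s := by
        rw [hdiff, abs_div, abs_neg, abs_of_pos (show 0 < s by linarith)]
    _ ≤ |exp (l1 * t) - exp (l2 * t)| / (a / 2) :=
        div_le_div_of_nonneg_left (abs_nonneg _) (by positivity) hs
    _ = (2 / a) * |exp (l1 * t) - exp (l2 * t)| := by ring
    _ ≤ (2 / a) * (exp (-(3 / 4) * a * t) + exp (-(b / a) * t)) := by
        gcongr
        exact abs_exp_mul_sub_exp_mul_le hl1_le hl2_le ht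

theorem stmt4 (a b l1 l2 t : ℝ) (ha : 0 < a) (hb : 0 < b)
    (hgap : (1 / 4) * a ^ 2 ≤ a ^ 2 - 4 * b)
    (hl1 : l1 = (-a - Real.sqrt (a ^ 2 - 4 * b)) / 2)
    (hl2 : l2 = (-a + Real.sqrt (a ^ 2 - 4 * b)) / 2)
    (ht : 0 ≤ t) :
    |(Real.exp (l1 * t) - Real.exp (l2 * t)) / (l1 - l2)| ≤
      (2 / a) * (Real.exp (-(3 / 4) * a * t) + Real.exp (-(b / a) * t)) :=
  stmt4_general a b l1 l2 t ha hgap hl1 hl2 ht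
end

section
/- For all ξ = (ξ₁, ξ₂) ∈ ℝ² with ξ ≠ 0 and |ξ₁| ≥ |ξ₂|, and ν, η > 0, one has (νη ξ₁² ξ₂² + ξ₁²/|ξ|²)/(ν ξ₂² + η ξ₁²) ≥ c (ξ₂² + ξ₁²/|ξ|⁴) for some constant c = c(ν, η) > 0 depending only on ν and η. -/
/-- Lower bound on the decay rate of the slow mode in the region `{|ξ₁| ≥ |ξ₂|}`. -/
theorem stmt17 (ν η : ℝ) (hν : 0 < ν) (hη : 0 < η) :
    ∃ c : ℝ, 0 < c ∧ ∀ ξ₁ ξ₂ : ℝ, (ξ₁, ξ₂) ≠ (0, 0) → |ξ₂| ≤ |ξ₁| →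
      c * (ξ₂ ^ 2 + ξ₁ ^ 2 / (ξ₁ ^ 2 + ξ₂ ^ 2) ^ 2) ≤
        (ν * η * ξ₁ ^ 2 * ξ₂ ^ 2 + ξ₁ ^ 2 / (ξ₁ ^ 2 + ξ₂ ^ 2)) /
          (ν * ξ₂ ^ 2 + η * ξ₁ ^ 2) := by
  refine ⟨min (ν * η) 1 / (ν + η), by positivity, ?_⟩
  intro ξ₁ ξ₂ hne habs
  have hξ1 : ξ₁ ≠ 0 := by
    rintro rfl
    have h2 : ξ₂ = 0 := by
      have := abs_nonneg ξ₂
      simpa [abs_eq_zero] using le_antisymm habs (by simpa using this)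
    exact hne (by simp [h2])
  have hsq : ξ₂ ^ 2 ≤ ξ₁ ^ 2 := by
    have := pow_le_pow_left₀ (abs_nonneg ξ₂) habs 2
    simpa [sq_abs] using this
  have hs : (0:ℝ) < ξ₁ ^ 2 + ξ₂ ^ 2 := by positivity
  have hD : (0:ℝ) < ν * ξ₂ ^ 2 + η * ξ₁ ^ 2 := by positivity
  have hνη : (0:ℝ) < ν + η := by linarith
  have hm1 : min (ν * η) 1 ≤ ν * η := min_le_left _ _
  have hm2 : min (ν * η) 1 ≤ 1 := min_le_right _ _
  have hm0 : (0:ℝ) < min (ν * η) 1 := lt_min (by positivity) one_pos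
  have hx1 : (0:ℝ) < ξ₁ ^ 2 := by positivity
  set m := min (ν * η) 1 with hm
  set s := ξ₁ ^ 2 + ξ₂ ^ 2 with hsdef
  have hstep1 : m / (ν + η) * (ξ₂ ^ 2 + ξ₁ ^ 2 / s ^ 2) ≤
      (ν * η * ξ₂ ^ 2 + 1 / s) / (ν + η) := by
    rw [div_mul_eq_mul_div, div_le_div_iff_of_pos_right hνη]
    have h1 : m * ξ₂ ^ 2 ≤ ν * η * ξ₂ ^ 2 :=
      mul_le_mul_of_nonneg_right hm1 (sq_nonneg _)
    have h2 : m * (ξ₁ ^ 2 / s ^ 2) ≤ 1 / s := by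
      have hq : ξ₁ ^ 2 / s ^ 2 ≤ 1 / s := by
        rw [div_le_div_iff₀ (by positivity) hs]
        nlinarith [sq_nonneg ξ₂]
      calc m * (ξ₁ ^ 2 / s ^ 2) ≤ 1 * (ξ₁ ^ 2 / s ^ 2) :=
            mul_le_mul_of_nonneg_right hm2 (by positivity)
        _ = ξ₁ ^ 2 / s ^ 2 := one_mul _
        _ ≤ 1 / s := hq
    calc m * (ξ₂ ^ 2 + ξ₁ ^ 2 / s ^ 2) = m * ξ₂ ^ 2 + m * (ξ₁ ^ 2 / s ^ 2) := by ring
      _ ≤ ν * η * ξ₂ ^ 2 + 1 / s := add_le_add h1 h2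
  refine hstep1.trans ?_
  rw [div_le_div_iff₀ hνη hD]
  have hNum : ν * η * ξ₁ ^ 2 * ξ₂ ^ 2 + ξ₁ ^ 2 / s = (ν * η * ξ₂ ^ 2 + 1 / s) * ξ₁ ^ 2 := by
    field_simp
  rw [hNum]
  have hDle : ν * ξ₂ ^ 2 + η * ξ₁ ^ 2 ≤ (ν + η) * ξ₁ ^ 2 := by nlinarith
  have hpos : (0:ℝ) < ν * η * ξ₂ ^ 2 + 1 / s := by positivity
  calc (ν * η * ξ₂ ^ 2 + 1 / s) * (ν * ξ₂ ^ 2 + η * ξ₁ ^ 2)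
      ≤ (ν * η * ξ₂ ^ 2 + 1 / s) * ((ν + η) * ξ₁ ^ 2) :=
        mul_le_mul_of_nonneg_left hDle hpos.le
    _ = (ν * η * ξ₂ ^ 2 + 1 / s) * ξ₁ ^ 2 * (ν + η) := by ring
end
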